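/- arXiv:2304.06137 — 6 statements merged into one kernel-verified Lean document; each statement's English description precedes it below -/
import Mathlib

section
/- Let m, n be natural numbers, let s, t : Fin m → Fin n with s k ≠ t k for all k, let L : Fin m → ℝ with L k > 0, let D : Fin m → ℝ, and let c : ℝ. For each k ∈ Fin m let p_k, q_k : ℝ → ℝ be functions having derivatives p_k'(x), q_k'(x) at every x ∈ [0, L k], with p_k' and q_k' interval-integrable on [0, L k]. Assume there exists P : Fin n → ℝ such that p_k(0) = P(s k) and p_k(L k) = P(t k) for all k (pressure continuity), and that for every vertex v ∈ Fin n: P v · ( Σ_{k : t k = v} (D k)² · q_k(L k) − Σ_{k : s k = v} (D k)² · q_k(0) ) = 0. Then Σ_{k ∈ Fin m} (D k)² · c² · ∫_0^{L k} ( q_k'(x) · p_k(x) + p_k'(x) · q_k(x) ) dx = 0. -/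
/-!
Integrating `(p q)' = q' p + p' q` along each pipe leaves only the boundary values
`P (t k) q_k(L_k) - P (s k) q_k(0)`, because the pressure is continuous at the vertices.
Regrouping this sum over pipes by vertices gives `Σ_v P v · (net flux into v)`,
and every summand vanishes by the vertex conditions.
-/

open MeasureTheory Set Finset

theorem intervalIntegral.integral_deriv_mul_add_deriv_mul_eq_sub {p q p' q' : ℝ → ℝ} {a b : ℝ}
    (hab : a ≤ b) (hp : ∀ x ∈ Icc a b, HasDerivAt p (p' x) x)
    (hq : ∀ x ∈ Icc a b, HasDerivAt q (q' x) x)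
    (hp' : IntervalIntegrable p' volume a b) (hq' : IntervalIntegrable q' volume a b) :
    ∫ x in a..b, (q' x * p x + p' x * q x) = p b * q b - p a * q a := by
  rw [← uIcc_of_le hab] at hp hq
  simp_rw [mul_comm (p' _) (q _), mul_comm (p _) (q _)]
  exact intervalIntegral.integral_deriv_mul_eq_sub hq hp hq' hp'

theorem Finset.sum_mul_apply_eq_sum_mul_sum_fiber {ι κ R : Type*} [Fintype κ] [DecidableEq κ]
    [NonUnitalNonAssocSemiring R] (s : Finset ι) (g : ι → κ) (P : κ → R) (a : ι → R) :
    ∑ i ∈ s, P (g i) * a i = ∑ j, P j * ∑ i ∈ s with g i = j, a i := by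
  rw [← sum_fiberwise s g]
  refine sum_congr rfl fun j _ => ?_
  rw [mul_sum]
  exact sum_congr rfl fun i hi => by rw [(mem_filter.mp hi).2]

theorem Finset.sum_mul_target_sub_mul_source_eq_sum_vertex {ι κ R : Type*} [Fintype ι]
    [Fintype κ] [DecidableEq κ] [NonUnitalNonAssocRing R] (s t : ι → κ) (P : κ → R)
    (a b : ι → R) :
    ∑ k, (P (t k) * a k - P (s k) * b k) =
      ∑ v, P v * ((∑ k with t k = v, a k) - ∑ k with s k = v, b k) := by
  rw [sum_sub_distrib, sum_mul_apply_eq_sum_mul_sum_fiber univ t,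
    sum_mul_apply_eq_sum_mul_sum_fiber univ s, ← sum_sub_distrib]
  simp_rw [mul_sub]

theorem network_dissipativity_identity_general
    (m n : ℕ) (s t : Fin m → Fin n)
    (L : Fin m → ℝ) (hL : ∀ k, 0 < L k) (D : Fin m → ℝ) (c : ℝ)
    (p q p' q' : Fin m → ℝ → ℝ)
    (hp : ∀ k, ∀ x ∈ Set.Icc (0 : ℝ) (L k), HasDerivAt (p k) (p' k x) x)
    (hq : ∀ k, ∀ x ∈ Set.Icc (0 : ℝ) (L k), HasDerivAt (q k) (q' k x) x)
    (hp' : ∀ k, IntervalIntegrable (p' k) volume 0 (L k))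
    (hq' : ∀ k, IntervalIntegrable (q' k) volume 0 (L k))
    (P : Fin n → ℝ)
    (hP0 : ∀ k, p k 0 = P (s k)) (hPL : ∀ k, p k (L k) = P (t k))
    (hvertex : ∀ v : Fin n,
      P v * ((∑ k ∈ Finset.univ.filter fun k => t k = v, (D k) ^ 2 * q k (L k)) -
             (∑ k ∈ Finset.univ.filter fun k => s k = v, (D k) ^ 2 * q k 0)) = 0) :
    ∑ k : Fin m, (D k) ^ 2 * c ^ 2 *
      ∫ x in (0 : ℝ)..(L k), (q' k x * p k x + p' k x * q k x) = 0 := by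
  have hpipe : ∀ k, ∫ x in (0 : ℝ)..(L k), (q' k x * p k x + p' k x * q k x) =
      P (t k) * q k (L k) - P (s k) * q k 0 := fun k => by
    rw [intervalIntegral.integral_deriv_mul_add_deriv_mul_eq_sub (hL k).le (hp k) (hq k)
      (hp' k) (hq' k), hP0, hPL]
  calc ∑ k, (D k) ^ 2 * c ^ 2 * ∫ x in (0 : ℝ)..(L k), (q' k x * p k x + p' k x * q k x)
      = c ^ 2 * ∑ k, (P (t k) * ((D k) ^ 2 * q k (L k)) - P (s k) * ((D k) ^ 2 * q k 0)) := by
        rw [mul_sum]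
        exact sum_congr rfl fun k _ => by rw [hpipe]; ring
    _ = 0 := by
        rw [sum_mul_target_sub_mul_source_eq_sum_vertex]
        simp [hvertex]

/-- dissipativity identity `(𝔸u, u) = 0` for the network transport
operator, expressed as a sum over pipes of interval integrals. -/
theorem network_dissipativity_identity
    (m n : ℕ) (s t : Fin m → Fin n) (hst : ∀ k, s k ≠ t k)
    (L : Fin m → ℝ) (hL : ∀ k, 0 < L k) (D : Fin m → ℝ) (c : ℝ)
    (p q p' q' : Fin m → ℝ → ℝ)
    (hp : ∀ k, ∀ x ∈ Set.Icc (0 : ℝ) (L k), HasDerivAt (p k) (p' k x) x)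
    (hq : ∀ k, ∀ x ∈ Set.Icc (0 : ℝ) (L k), HasDerivAt (q k) (q' k x) x)
    (hp' : ∀ k, IntervalIntegrable (p' k) volume 0 (L k))
    (hq' : ∀ k, IntervalIntegrable (q' k) volume 0 (L k))
    (P : Fin n → ℝ)
    (hP0 : ∀ k, p k 0 = P (s k)) (hPL : ∀ k, p k (L k) = P (t k))
    (hvertex : ∀ v : Fin n,
      P v * ((∑ k ∈ Finset.univ.filter fun k => t k = v, (D k) ^ 2 * q k (L k)) -
             (∑ k ∈ Finset.univ.filter fun k => s k = v, (D k) ^ 2 * q k 0)) = 0) :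
    ∑ k : Fin m, (D k) ^ 2 * c ^ 2 *
      ∫ x in (0 : ℝ)..(L k), (q' k x * p k x + p' k x * q k x) = 0 :=
  network_dissipativity_identity_general m n s t L hL D c p q p' q' hp hq hp' hq' P hP0 hPL hvertex
end

section
/- Let a < b be real numbers and ρ > 0. Let u, v : ℝ → ℝ be differentiable at every point of [a, b] with derivative functions u' and v', assume u' and v' are square-integrable on (a, b), and assume v(x) ≥ ρ for all x ∈ [a, b]. Then the function w(x) := u(x)·|u(x)| / v(x) is differentiable at every point x ∈ [a, b] with w'(x) = ( 2·|u(x)|·u'(x)·v(x) − u(x)·|u(x)|·v'(x) ) / v(x)², and both w and w' are square-integrable on (a, b). -/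
/-!
The map `y ↦ y * |y|` is `C¹` with derivative `2 * |y|`, so the chain and quotient rules give
the derivative of `w = u * |u| / v`. On the compact interval `u` and `v` are continuous and
`v ≥ ρ > 0`, so `w` and the coefficients `2 * |u| / v` and `u * |u| / v ^ 2` are bounded. Hence
`w` is square integrable on the finite interval, and
`w' = (2 * |u| / v) * u' - (u * |u| / v ^ 2) * v'` is a combination of `L²` functions with
bounded coefficients.
-/

open MeasureTheory Filter Topology Set

theorem hasDerivAt_mul_abs (x : ℝ) : HasDerivAt (fun y : ℝ => y * |y|) (2 * |x|) x := by
  rcases eq_or_ne x 0 with rfl | hx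
  · rw [hasDerivAt_iff_tendsto_slope_zero]
    simp only [zero_add, sub_zero, abs_zero, mul_zero, smul_eq_mul]
    refine (continuous_abs.tendsto' (0 : ℝ) 0 abs_zero |>.mono_left nhdsWithin_le_nhds).congr' ?_
    filter_upwards [self_mem_nhdsWithin] with t (ht : t ≠ 0)
    field_simp
  · refine ((hasDerivAt_id' x).mul (hasDerivAt_abs hx)).congr_deriv ?_
    rw [self_mul_sign]
    ring

theorem HasDerivAt.mul_abs {f : ℝ → ℝ} {f' x : ℝ} (hf : HasDerivAt f f' x) :
    HasDerivAt (fun y => f y * |f y|) (2 * |f x| * f') x :=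
  (hasDerivAt_mul_abs (f x)).comp x hf

theorem ContinuousOn.memLp_top_restrict {α E : Type*} [TopologicalSpace α] [MeasurableSpace α]
    [OpensMeasurableSpace α] [NormedAddCommGroup E] [SecondCountableTopologyEither α E]
    {μ : Measure α} {f : α → E} {K s : Set α} (hf : ContinuousOn f K) (hK : IsCompact K)
    (hs : MeasurableSet s) (hsK : s ⊆ K) : MemLp f ⊤ (μ.restrict s) := by
  obtain ⟨C, hC⟩ := hK.exists_bound_of_continuousOn hf
  refine memLp_top_of_bound ((hf.mono hsK).aestronglyMeasurable hs) C ?_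
  exact (ae_restrict_iff' hs).2 (ae_of_all _ fun x hx => hC x (hsK hx))

theorem quotient_rule_u_abs_u_div_v_general
    (a b ρ : ℝ) (hρ : 0 < ρ)
    (u v u' v' : ℝ → ℝ)
    (hu : ∀ x ∈ Set.Icc a b, HasDerivAt u (u' x) x)
    (hv : ∀ x ∈ Set.Icc a b, HasDerivAt v (v' x) x)
    (hu' : MemLp u' 2 (volume.restrict (Set.Ioo a b)))
    (hv' : MemLp v' 2 (volume.restrict (Set.Ioo a b)))
    (hvρ : ∀ x ∈ Set.Icc a b, ρ ≤ v x) :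
    (∀ x ∈ Set.Icc a b,
      HasDerivAt (fun y => u y * |u y| / v y)
        ((2 * |u x| * u' x * v x - u x * |u x| * v' x) / (v x) ^ 2) x) ∧
    MemLp (fun x => u x * |u x| / v x) 2 (volume.restrict (Set.Ioo a b)) ∧
    MemLp (fun x => (2 * |u x| * u' x * v x - u x * |u x| * v' x) / (v x) ^ 2) 2
      (volume.restrict (Set.Ioo a b)) := by
  have hv0 : ∀ x ∈ Icc a b, v x ≠ 0 := fun x hx => (hρ.trans_le (hvρ x hx)).ne'
  have hcu : ContinuousOn u (Icc a b) := fun x hx => (hu x hx).continuousAt.continuousWithinAt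
  have hcv : ContinuousOn v (Icc a b) := fun x hx => (hv x hx).continuousAt.continuousWithinAt
  have hbdd {f : ℝ → ℝ} (hf : ContinuousOn f (Icc a b)) :
      MemLp f ⊤ (volume.restrict (Ioo a b)) :=
    hf.memLp_top_restrict isCompact_Icc measurableSet_Ioo Ioo_subset_Icc_self
  have hw : ContinuousOn (fun x => u x * |u x| / v x) (Icc a b) := (hcu.mul hcu.abs).div hcv hv0
  have hw'_eq : (fun x => (2 * |u x| * u' x * v x - u x * |u x| * v' x) / (v x) ^ 2) =
      fun x => 2 * |u x| / v x * u' x - u x * |u x| / v x ^ 2 * v' x := by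
    funext x
    rcases eq_or_ne (v x) 0 with h | h
    · simp [h]
    · field_simp
  refine ⟨fun x hx => (hu x hx).mul_abs.div (hv x hx) (hv0 x hx),
    (hbdd hw).mono_exponent le_top, ?_⟩
  rw [hw'_eq]
  exact (hu'.mul' (hbdd ((continuousOn_const.mul hcu.abs).div hcv hv0))).sub
    (hv'.mul' (hbdd ((hcu.mul hcu.abs).div (hcv.pow 2) fun x hx => pow_ne_zero 2 (hv0 x hx))))

/-- Lemma 4.6: quotient rule and square integrability for
`w = u·|u|/v` when `v ≥ ρ > 0` on `[a,b]` and `u', v'` are square integrable. -/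
theorem quotient_rule_u_abs_u_div_v
    (a b ρ : ℝ) (hab : a < b) (hρ : 0 < ρ)
    (u v u' v' : ℝ → ℝ)
    (hu : ∀ x ∈ Set.Icc a b, HasDerivAt u (u' x) x)
    (hv : ∀ x ∈ Set.Icc a b, HasDerivAt v (v' x) x)
    (hu' : MemLp u' 2 (volume.restrict (Set.Ioo a b)))
    (hv' : MemLp v' 2 (volume.restrict (Set.Ioo a b)))
    (hvρ : ∀ x ∈ Set.Icc a b, ρ ≤ v x) :
    (∀ x ∈ Set.Icc a b,
      HasDerivAt (fun y => u y * |u y| / v y)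
        ((2 * |u x| * u' x * v x - u x * |u x| * v' x) / (v x) ^ 2) x) ∧
    MemLp (fun x => u x * |u x| / v x) 2 (volume.restrict (Set.Ioo a b)) ∧
    MemLp (fun x => (2 * |u x| * u' x * v x - u x * |u x| * v' x) / (v x) ^ 2) 2
      (volume.restrict (Set.Ioo a b)) :=
  quotient_rule_u_abs_u_div_v_general a b ρ hρ u v u' v' hu hv hu' hv' hvρ
end

section
/- Let 0 < a ≤ b, M ≥ 0 and L > 0. Let p₁, p₂, q₁, q₂ : ℝ → ℝ be measurable functions such that for almost every x ∈ (0, L): a ≤ p₁(x) ≤ b, a ≤ p₂(x) ≤ b, |q₁(x)| ≤ M and |q₂(x)| ≤ M. Then the L²(0,L) norm of x ↦ q₁(x)|q₁(x)|/p₁(x) − q₂(x)|q₂(x)|/p₂(x) is at most (M²/a²) · ‖p₁ − p₂‖_{L²(0,L)} + (2·M·b/a²) · ‖q₁ − q₂‖_{L²(0,L)}. -/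
open MeasureTheory

lemma euler_abs_sq (M q₁ q₂ : ℝ) (hM : 0 ≤ M) (h5 : |q₁| ≤ M) (h6 : |q₂| ≤ M) :
    |q₁ * abs q₁ - q₂ * abs q₂| ≤ 2 * M * |q₁ - q₂| := by
  rcases abs_cases (q₁ * abs q₁ - q₂ * abs q₂) with ⟨e1, _⟩ | ⟨e1, _⟩ <;>
  rcases abs_cases (q₁ - q₂) with ⟨e2, _⟩ | ⟨e2, _⟩ <;>
  rcases abs_cases q₁ with ⟨e3, s3⟩ | ⟨e3, s3⟩ <;>
  rcases abs_cases q₂ with ⟨e4, s4⟩ | ⟨e4, s4⟩ <;>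
  rw [e1, e2, e3, e4] <;> nlinarith [abs_nonneg q₁, abs_nonneg q₂, e3 ▸ h5, e4 ▸ h6]

lemma euler_ptwise (a b M : ℝ) (ha : 0 < a) (hab : a ≤ b) (hM : 0 ≤ M)
    (p₁ p₂ q₁ q₂ : ℝ) (h1 : a ≤ p₁) (h2 : p₁ ≤ b) (h3 : a ≤ p₂) (h4 : p₂ ≤ b)
    (h5 : |q₁| ≤ M) (h6 : |q₂| ≤ M) :
    |q₁ * abs q₁ / p₁ - q₂ * abs q₂ / p₂| ≤
      M ^ 2 / a ^ 2 * |p₁ - p₂| + 2 * M * b / a ^ 2 * |q₁ - q₂| := by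
  have hp₁ : 0 < p₁ := lt_of_lt_of_le ha h1
  have hp₂ : 0 < p₂ := lt_of_lt_of_le ha h3
  have e : q₁ * abs q₁ / p₁ - q₂ * abs q₂ / p₂ =
      (q₁ * abs q₁ - q₂ * abs q₂) / p₁ + q₂ * abs q₂ * (p₂ - p₁) / (p₁ * p₂) := by
    field_simp; ring
  rw [e]
  have habs := euler_abs_sq M q₁ q₂ hM h5 h6
  have t1 : |(q₁ * abs q₁ - q₂ * abs q₂) / p₁| ≤ 2 * M * b / a ^ 2 * |q₁ - q₂| := by
    rw [abs_div, abs_of_pos hp₁]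
    have step1 : |q₁ * abs q₁ - q₂ * abs q₂| / p₁ ≤ (2 * M * |q₁ - q₂|) / a :=
      div_le_div₀ (by positivity) habs ha h1
    refine step1.trans ?_
    rw [← sub_nonneg]
    have heq : 2 * M * b / a ^ 2 * |q₁ - q₂| - 2 * M * |q₁ - q₂| / a =
        2 * M * |q₁ - q₂| * (b - a) / a ^ 2 := by field_simp
    rw [heq]
    have hba : 0 ≤ b - a := sub_nonneg.mpr hab
    positivity
  have t2 : |q₂ * abs q₂ * (p₂ - p₁) / (p₁ * p₂)| ≤ M ^ 2 / a ^ 2 * |p₁ - p₂| := by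
    rw [abs_div, abs_of_pos (mul_pos hp₁ hp₂), abs_mul, abs_mul, abs_abs]
    have hnum : |q₂| * |q₂| * |p₂ - p₁| ≤ M ^ 2 * |p₁ - p₂| := by
      rw [abs_sub_comm]
      have hq : |q₂| * |q₂| ≤ M ^ 2 := by nlinarith [abs_nonneg q₂]
      exact mul_le_mul_of_nonneg_right hq (abs_nonneg _)
    have hden : a ^ 2 ≤ p₁ * p₂ := by nlinarith
    calc |q₂| * |q₂| * |p₂ - p₁| / (p₁ * p₂)
        ≤ M ^ 2 * |p₁ - p₂| / a ^ 2 :=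
          div_le_div₀ (by positivity) hnum (by positivity) hden
      _ = M ^ 2 / a ^ 2 * |p₁ - p₂| := by ring
  calc |(q₁ * abs q₁ - q₂ * abs q₂) / p₁ + q₂ * abs q₂ * (p₂ - p₁) / (p₁ * p₂)|
      ≤ |(q₁ * abs q₁ - q₂ * abs q₂) / p₁| + |q₂ * abs q₂ * (p₂ - p₁) / (p₁ * p₂)| :=
        abs_add_le _ _
    _ ≤ 2 * M * b / a ^ 2 * |q₁ - q₂| + M ^ 2 / a ^ 2 * |p₁ - p₂| :=
        add_le_add t1 t2
    _ = M ^ 2 / a ^ 2 * |p₁ - p₂| + 2 * M * b / a ^ 2 * |q₁ - q₂| := by ring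

/-- Lipschitz estimate in `L²(0,L)` for the Euler nonlinearity
`(p,q) ↦ q|q|/p` on the box `[a,b] × [-M,M]` with `0 < a`. -/
theorem euler_nonlinearity_L2_lipschitz
    (a b M L : ℝ) (ha : 0 < a) (hab : a ≤ b) (hM : 0 ≤ M) (hL : 0 < L)
    (p₁ p₂ q₁ q₂ : ℝ → ℝ)
    (hp₁m : Measurable p₁) (hp₂m : Measurable p₂)
    (hq₁m : Measurable q₁) (hq₂m : Measurable q₂)
    (hp₁ : ∀ᵐ x ∂(volume.restrict (Set.Ioo 0 L)), a ≤ p₁ x ∧ p₁ x ≤ b)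
    (hp₂ : ∀ᵐ x ∂(volume.restrict (Set.Ioo 0 L)), a ≤ p₂ x ∧ p₂ x ≤ b)
    (hq₁ : ∀ᵐ x ∂(volume.restrict (Set.Ioo 0 L)), |q₁ x| ≤ M)
    (hq₂ : ∀ᵐ x ∂(volume.restrict (Set.Ioo 0 L)), |q₂ x| ≤ M) :
    eLpNorm (fun x => q₁ x * |q₁ x| / p₁ x - q₂ x * |q₂ x| / p₂ x) 2
        (volume.restrict (Set.Ioo 0 L)) ≤
      ENNReal.ofReal (M ^ 2 / a ^ 2) *
          eLpNorm (fun x => p₁ x - p₂ x) 2 (volume.restrict (Set.Ioo 0 L)) +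
        ENNReal.ofReal (2 * M * b / a ^ 2) *
          eLpNorm (fun x => q₁ x - q₂ x) 2 (volume.restrict (Set.Ioo 0 L)) := by
  set μ := volume.restrict (Set.Ioo 0 L)
  set c₁ : ℝ := M ^ 2 / a ^ 2 with hc₁
  set c₂ : ℝ := 2 * M * b / a ^ 2 with hc₂
  have hc₁0 : 0 ≤ c₁ := by positivity
  have hb : 0 < b := ha.trans_le hab
  have hc₂0 : 0 ≤ c₂ := by positivity
  set g₁ : ℝ → ℝ := fun x => c₁ * |p₁ x - p₂ x| with hg₁
  set g₂ : ℝ → ℝ := fun x => c₂ * |q₁ x - q₂ x| with hg₂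
  have step1 : eLpNorm (fun x => q₁ x * |q₁ x| / p₁ x - q₂ x * |q₂ x| / p₂ x) 2 μ ≤
      eLpNorm (fun x => g₁ x + g₂ x) 2 μ := by
    refine eLpNorm_mono_ae ?_
    filter_upwards [hp₁, hp₂, hq₁, hq₂] with x ⟨h1, h2⟩ ⟨h3, h4⟩ h5 h6
    have key := euler_ptwise a b M ha hab hM (p₁ x) (p₂ x) (q₁ x) (q₂ x) h1 h2 h3 h4 h5 h6
    have hgnn : 0 ≤ g₁ x + g₂ x := by
      simp only [hg₁, hg₂]; positivity
    rw [Real.norm_eq_abs, Real.norm_eq_abs, abs_of_nonneg hgnn]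
    exact key
  have hm₁ : AEStronglyMeasurable g₁ μ := by
    apply Measurable.aestronglyMeasurable; measurability
  have hm₂ : AEStronglyMeasurable g₂ μ := by
    apply Measurable.aestronglyMeasurable; measurability
  have step2 : eLpNorm (fun x => g₁ x + g₂ x) 2 μ ≤ eLpNorm g₁ 2 μ + eLpNorm g₂ 2 μ :=
    eLpNorm_add_le hm₁ hm₂ (by norm_num)
  have e₁ : eLpNorm g₁ 2 μ = ENNReal.ofReal c₁ * eLpNorm (fun x => p₁ x - p₂ x) 2 μ := by
    have : g₁ = c₁ • (fun x => |p₁ x - p₂ x|) := rfl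
    rw [this, eLpNorm_const_smul]
    congr 1
    · simp [Real.enorm_eq_ofReal hc₁0]
    · have : (fun x => |p₁ x - p₂ x|) = fun x => ‖p₁ x - p₂ x‖ := by
        simp [Real.norm_eq_abs]
      rw [this, eLpNorm_norm]
  have e₂ : eLpNorm g₂ 2 μ = ENNReal.ofReal c₂ * eLpNorm (fun x => q₁ x - q₂ x) 2 μ := by
    have : g₂ = c₂ • (fun x => |q₁ x - q₂ x|) := rfl
    rw [this, eLpNorm_const_smul]
    congr 1
    · simp [Real.enorm_eq_ofReal hc₂0]
    · have : (fun x => |q₁ x - q₂ x|) = fun x => ‖q₁ x - q₂ x‖ := by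
        simp [Real.norm_eq_abs]
      rw [this, eLpNorm_norm]
  calc eLpNorm (fun x => q₁ x * |q₁ x| / p₁ x - q₂ x * |q₂ x| / p₂ x) 2 μ
      ≤ eLpNorm (fun x => g₁ x + g₂ x) 2 μ := step1
    _ ≤ eLpNorm g₁ 2 μ + eLpNorm g₂ 2 μ := step2
    _ = ENNReal.ofReal c₁ * eLpNorm (fun x => p₁ x - p₂ x) 2 μ +
        ENNReal.ofReal c₂ * eLpNorm (fun x => q₁ x - q₂ x) 2 μ := by rw [e₁, e₂]
end

section
/- Let 0 < a ≤ b and M ≥ 0. There exists a constant C > 0, depending only on a, b and M, such that for all real numbers p₁, p₂ ∈ [a, b], q₁, q₂ ∈ [−M, M] and all real numbers ṗ₁, ṗ₂, q̇₁, q̇₂ one has | (2|q₁|·q̇₁·p₁ − q₁|q₁|·ṗ₁)/p₁² − (2|q₂|·q̇₂·p₂ − q₂|q₂|·ṗ₂)/p₂² | ≤ C·( |q̇₁ − q̇₂| + |ṗ₁ − ṗ₂| + (1 + |q̇₂| + |ṗ₂|)·( |p₁ − p₂| + |q₁ − q₂| ) ). -/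
/-!
For `p > 0` the expression equals `2 |r| q̇ - r |r| ṗ` with `r = q / p`: it is linear in `(q̇, ṗ)`
with coefficients `2 |r|` and `r |r|`. On the box, `r` is bounded by `M / a` and Lipschitz in
`(p, q)` because `p ≥ a`, so both coefficients are bounded and Lipschitz. Splitting
`x₁ y₁ - x₂ y₂ = x₁ (y₁ - y₂) + (x₁ - x₂) y₂` then bounds the difference by the increments of
`(q̇, ṗ)` plus `(|q̇₂| + |ṗ₂|)` times the increment of `(p, q)`.
-/

theorem abs_mul_sub_mul_le {α : Type*} [Ring α] [LinearOrder α] [IsStrictOrderedRing α]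
    (x₁ x₂ y₁ y₂ : α) :
    |x₁ * y₁ - x₂ * y₂| ≤ |x₁| * |y₁ - y₂| + |x₁ - x₂| * |y₂| := by
  calc |x₁ * y₁ - x₂ * y₂| = |x₁ * (y₁ - y₂) + (x₁ - x₂) * y₂| := by noncomm_ring
    _ ≤ |x₁| * |y₁ - y₂| + |x₁ - x₂| * |y₂| := by
      simpa only [abs_mul] using abs_add_le (x₁ * (y₁ - y₂)) ((x₁ - x₂) * y₂)

theorem abs_mul_abs_self_sub_le {α : Type*} [CommRing α] [LinearOrder α] [IsStrictOrderedRing α]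
    (x y : α) : |x * |x| - y * (|y|)| ≤ (|x| + |y|) * |x - y| := by
  calc |x * |x| - y * (|y|)| ≤ |x| * |(|x| - |y|)| + |x - y| * |(|y|)| :=
        abs_mul_sub_mul_le _ _ _ _
    _ ≤ |x| * |x - y| + |x - y| * (|y|) := by
      rw [abs_abs]
      exact add_le_add_left
        (mul_le_mul_of_nonneg_left (abs_abs_sub_abs_le_abs_sub x y) (abs_nonneg x)) _
    _ = (|x| + |y|) * |x - y| := by ring

theorem abs_div_sub_div_le {a M p₁ p₂ q₁ q₂ : ℝ} (ha : 0 < a) (hp₁ : a ≤ p₁) (hp₂ : a ≤ p₂)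
    (hq₂ : |q₂| ≤ M) : |q₁ / p₁ - q₂ / p₂| ≤ |q₁ - q₂| / a + M * |p₁ - p₂| / a ^ 2 := by
  have hp₁' : 0 < p₁ := ha.trans_le hp₁
  have hp₂' : 0 < p₂ := ha.trans_le hp₂
  have hinv : |p₁⁻¹ - p₂⁻¹| ≤ |p₁ - p₂| / a ^ 2 := by
    rw [inv_sub_inv hp₁'.ne' hp₂'.ne', abs_div, abs_sub_comm, abs_of_pos (mul_pos hp₁' hp₂'),
      sq]
    gcongr
  calc |q₁ / p₁ - q₂ / p₂| = |p₁⁻¹ * q₁ - p₂⁻¹ * q₂| := by simp only [div_eq_inv_mul]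
    _ ≤ |p₁⁻¹| * |q₁ - q₂| + |p₁⁻¹ - p₂⁻¹| * |q₂| := abs_mul_sub_mul_le _ _ _ _
    _ ≤ a⁻¹ * |q₁ - q₂| + |p₁ - p₂| / a ^ 2 * M := by
      rw [abs_inv, abs_of_pos hp₁']
      gcongr
    _ = |q₁ - q₂| / a + M * |p₁ - p₂| / a ^ 2 := by ring

theorem euler_rate_eq_ratio {p : ℝ} (hp : 0 < p) (q dp dq : ℝ) :
    (2 * |q| * dq * p - q * |q| * dp) / p ^ 2 = 2 * |q / p| * dq - q / p * |q / p| * dp := by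
  rw [abs_div, abs_of_pos hp]
  field_simp

theorem abs_euler_rate_sub_le {r₁ r₂ R : ℝ} (hr₁ : |r₁| ≤ R) (hr₂ : |r₂| ≤ R)
    (u₁ u₂ v₁ v₂ : ℝ) :
    |(2 * |r₁| * u₁ - r₁ * |r₁| * v₁) - (2 * |r₂| * u₂ - r₂ * |r₂| * v₂)| ≤
      2 * (1 + R) ^ 2 * (|u₁ - u₂| + |v₁ - v₂| + (|u₂| + |v₂|) * |r₁ - r₂|) := by
  have hR : 0 ≤ R := (abs_nonneg r₁).trans hr₁
  have hu : |2 * |r₁| * u₁ - 2 * |r₂| * u₂| ≤ 2 * R * |u₁ - u₂| + 2 * |r₁ - r₂| * |u₂| := by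
    refine (abs_mul_sub_mul_le _ _ _ _).trans ?_
    rw [← mul_sub, abs_mul, abs_mul, abs_two, abs_abs]
    have := abs_abs_sub_abs_le_abs_sub r₁ r₂
    gcongr 2 * ?_ * _ + 2 * ?_ * _
  have hv : |r₁ * |r₁| * v₁ - r₂ * |r₂| * v₂| ≤ R ^ 2 * |v₁ - v₂| + 2 * R * |r₁ - r₂| * |v₂| := by
    refine (abs_mul_sub_mul_le _ _ _ _).trans ?_
    rw [abs_mul, abs_abs, ← sq]
    gcongr ?_ ^ 2 * _ + ?_ * _
    refine (abs_mul_abs_self_sub_le r₁ r₂).trans ?_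
    gcongr
    linarith
  calc _ ≤ |2 * |r₁| * u₁ - 2 * |r₂| * u₂| + |r₁ * |r₁| * v₁ - r₂ * |r₂| * v₂| := by
        rw [sub_sub_sub_comm]; exact abs_sub _ _
    _ ≤ _ := by
      nlinarith [abs_nonneg (u₁ - u₂), abs_nonneg (v₁ - v₂),
        mul_nonneg (abs_nonneg u₂) (abs_nonneg (r₁ - r₂)),
        mul_nonneg (abs_nonneg v₂) (abs_nonneg (r₁ - r₂))]

theorem euler_time_derivative_pointwise_estimate_general
    (a b M : ℝ) (ha : 0 < a) (hM : 0 ≤ M) :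
    ∃ C > 0, ∀ p₁ p₂ q₁ q₂ dp₁ dp₂ dq₁ dq₂ : ℝ,
      p₁ ∈ Set.Icc a b → p₂ ∈ Set.Icc a b →
      q₁ ∈ Set.Icc (-M) M → q₂ ∈ Set.Icc (-M) M →
      |(2 * |q₁| * dq₁ * p₁ - q₁ * |q₁| * dp₁) / p₁ ^ 2 -
        (2 * |q₂| * dq₂ * p₂ - q₂ * |q₂| * dp₂) / p₂ ^ 2| ≤
      C * (|dq₁ - dq₂| + |dp₁ - dp₂| +
        (1 + |dq₂| + |dp₂|) * (|p₁ - p₂| + |q₁ - q₂|)) := by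
  set R := M / a
  set L := 1 / a + M / a ^ 2
  refine ⟨2 * (1 + R) ^ 2 * (1 + L), by positivity, ?_⟩
  rintro p₁ p₂ q₁ q₂ dp₁ dp₂ dq₁ dq₂ ⟨hp₁, -⟩ ⟨hp₂, -⟩ hq₁ hq₂
  have hratio {p q : ℝ} (hp : a ≤ p) (hq : q ∈ Set.Icc (-M) M) : |q / p| ≤ R := by
    rw [abs_div, abs_of_pos (ha.trans_le hp)]
    exact div_le_div₀ hM (abs_le.mpr hq) ha hp
  have hratio_sub : |q₁ / p₁ - q₂ / p₂| ≤ L * (|p₁ - p₂| + |q₁ - q₂|) := by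
    calc _ ≤ |q₁ - q₂| / a + M * |p₁ - p₂| / a ^ 2 :=
          abs_div_sub_div_le ha hp₁ hp₂ (abs_le.mpr hq₂)
      _ ≤ |q₁ - q₂| / a + M * |p₁ - p₂| / a ^ 2 + (|p₁ - p₂| / a + M * |q₁ - q₂| / a ^ 2) :=
        le_add_of_nonneg_right (by positivity)
      _ = L * (|p₁ - p₂| + |q₁ - q₂|) := by ring
  rw [euler_rate_eq_ratio (ha.trans_le hp₁), euler_rate_eq_ratio (ha.trans_le hp₂)]
  have hL : 0 ≤ L := by positivity
  refine (abs_euler_rate_sub_le (hratio hp₁ hq₁) (hratio hp₂ hq₂) _ _ _ _).trans ?_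
  rw [mul_assoc (2 * (1 + R) ^ 2)]
  gcongr
  calc _ ≤ |dq₁ - dq₂| + |dp₁ - dp₂| + (|dq₂| + |dp₂|) * (L * (|p₁ - p₂| + |q₁ - q₂|)) := by
        gcongr
    _ ≤ _ := by
      nlinarith [mul_nonneg hL (abs_nonneg (dq₁ - dq₂)), mul_nonneg hL (abs_nonneg (dp₁ - dp₂)),
        abs_nonneg dq₂, abs_nonneg dp₂, abs_nonneg (p₁ - p₂), abs_nonneg (q₁ - q₂)]

/-- pointwise Lipschitz-type estimate for the time derivative
`∂ₜ(q|q|/p) = (2|q|q̇p − q|q|ṗ)/p²` of the Euler nonlinearity on the box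
`[a,b] × [−M,M]` with `0 < a`. -/
theorem euler_time_derivative_pointwise_estimate
    (a b M : ℝ) (ha : 0 < a) (hab : a ≤ b) (hM : 0 ≤ M) :
    ∃ C > 0, ∀ p₁ p₂ q₁ q₂ dp₁ dp₂ dq₁ dq₂ : ℝ,
      p₁ ∈ Set.Icc a b → p₂ ∈ Set.Icc a b →
      q₁ ∈ Set.Icc (-M) M → q₂ ∈ Set.Icc (-M) M →
      |(2 * |q₁| * dq₁ * p₁ - q₁ * |q₁| * dp₁) / p₁ ^ 2 -
        (2 * |q₂| * dq₂ * p₂ - q₂ * |q₂| * dp₂) / p₂ ^ 2| ≤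
      C * (|dq₁ - dq₂| + |dp₁ - dp₂| +
        (1 + |dq₂| + |dp₂|) * (|p₁ - p₂| + |q₁ - q₂|)) :=
  euler_time_derivative_pointwise_estimate_general a b M ha hM
end

section
/- Let β ≥ 0, γ > 0, q_e > 0 and p_in > 0 be real numbers. Define R(x) := e^{−2γx} · ( p_in² − (β·q_e²/γ)·(e^{2γx} − 1) ) and p(x) := √(R(x)). Then p(0) = p_in, and for every x with R(x) > 0: p(x) > 0, p is differentiable at x with p'(x) = −β·q_e²/p(x) − γ·p(x), and p'(x) < 0. In particular, together with the constant flux q_e, the pair (p, q_e) is a stationary solution of the isothermal semilinear Euler system: ∂ₓ q = 0 and ∂ₓ p + γ p = −β·q·|q|/p (using q_e|q_e| = q_e² since q_e > 0), and p is strictly decreasing on any interval where R > 0. -/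
/-!
Writing `c = β q_e²`, the closed form `R = (p_in² + c/γ) e^{-2γx} - c/γ` shows that `R` solves
the linear equation `R' = -2γR - 2c`. Since `(√R)' = R'/(2√R)`, this is exactly the steady-state
momentum equation `p' = -c/p - γp` for `p = √R` wherever `R > 0`; the right-hand side is then
negative, and the mean value theorem gives the monotonicity.
-/

open Real Set

lemma exp_mul_steady_eq (γ a c x : ℝ) :
    exp (-2 * γ * x) * (a - c / γ * (exp (2 * γ * x) - 1)) =
      (a + c / γ) * exp (-2 * γ * x) - c / γ := by
  have hexp : exp (-2 * γ * x) * exp (2 * γ * x) = 1 := by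
    rw [← exp_add]; ring_nf; exact exp_zero
  linear_combination (-(c / γ)) * hexp

lemma hasDerivAt_exp_mul_steady (γ a c x : ℝ) (hγ : γ ≠ 0) :
    HasDerivAt (fun x => exp (-2 * γ * x) * (a - c / γ * (exp (2 * γ * x) - 1)))
      (-2 * γ * (exp (-2 * γ * x) * (a - c / γ * (exp (2 * γ * x) - 1))) - 2 * c) x := by
  simp only [exp_mul_steady_eq γ a c]
  have hexp : HasDerivAt (fun x => exp (-2 * γ * x)) (exp (-2 * γ * x) * (-2 * γ)) x := by
    simpa using ((hasDerivAt_id x).const_mul (-2 * γ)).exp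
  refine ((hexp.const_mul (a + c / γ)).sub_const (c / γ)).congr_deriv ?_
  field_simp
  ring

lemma HasDerivAt.sqrt_of_linear_ode {f : ℝ → ℝ} {γ c x : ℝ}
    (hf : HasDerivAt f (-2 * γ * f x - 2 * c) x) (hx : 0 < f x) :
    HasDerivAt (fun y => √(f y)) (-c / √(f x) - γ * √(f x)) x := by
  refine (hf.sqrt hx.ne').congr_deriv ?_
  have hs : 0 < √(f x) := sqrt_pos.mpr hx
  field_simp
  linear_combination γ * sq_sqrt hx.le

lemma neg_div_sub_mul_neg {c γ s : ℝ} (hc : 0 ≤ c) (hγ : 0 < γ) (hs : 0 < s) :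
    -c / s - γ * s < 0 := by
  have : -c / s ≤ 0 := div_nonpos_of_nonpos_of_nonneg (neg_nonpos.mpr hc) hs.le
  nlinarith [mul_pos hγ hs]

lemma strictAntiOn_Icc_of_hasDerivAt_neg {f f' : ℝ → ℝ} {a b : ℝ}
    (hf : ∀ x ∈ Icc a b, HasDerivAt f (f' x) x) (hf' : ∀ x ∈ Icc a b, f' x < 0) :
    StrictAntiOn f (Icc a b) :=
  strictAntiOn_of_hasDerivWithinAt_neg (convex_Icc a b)
    (fun x hx => (hf x hx).continuousAt.continuousWithinAt)
    (fun x hx => (hf x (interior_subset hx)).hasDerivWithinAt)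
    (fun x hx => hf' x (interior_subset hx))

/-- the stationary (steady state) pressure profile
`p(x) = √(e^{−2γx}(p_in² − (βq_e²/γ)(e^{2γx} − 1)))` satisfies `p(0) = p_in`,
is positive where `R > 0`, is differentiable there with
`p' = −βq_e²/p − γp < 0`, together with the constant flux `q_e` it is a
stationary solution (`∂ₓq = 0` and `∂ₓp + γp = −βq|q|/p`), and it is strictly
decreasing on any interval on which `R > 0`. -/
theorem steady_state_solution
    (β γ qe pin : ℝ) (hβ : 0 ≤ β) (hγ : 0 < γ) (hqe : 0 < qe) (hpin : 0 < pin)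
    (R p : ℝ → ℝ)
    (hR : ∀ x, R x = Real.exp (-2 * γ * x) *
      (pin ^ 2 - (β * qe ^ 2 / γ) * (Real.exp (2 * γ * x) - 1)))
    (hp : ∀ x, p x = Real.sqrt (R x)) :
    p 0 = pin ∧
    (∀ x, 0 < R x →
      0 < p x ∧
      HasDerivAt p (-(β * qe ^ 2) / p x - γ * p x) x ∧
      -(β * qe ^ 2) / p x - γ * p x < 0 ∧
      HasDerivAt (fun _ : ℝ => qe) 0 x ∧
      (-(β * qe ^ 2) / p x - γ * p x) + γ * p x = -(β * qe * |qe|) / p x) ∧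
    (∀ x y, x < y → (∀ z ∈ Set.Icc x y, 0 < R z) → p y < p x) := by
  have hderiv : ∀ x, 0 < R x → HasDerivAt p (-(β * qe ^ 2) / p x - γ * p x) x := by
    intro x hx
    have hR' : HasDerivAt R (-2 * γ * R x - 2 * (β * qe ^ 2)) x := by
      convert hasDerivAt_exp_mul_steady γ (pin ^ 2) (β * qe ^ 2) x hγ.ne' using 1
      · exact funext hR
      · rw [hR]
    simpa only [← hp, ← funext hp] using hR'.sqrt_of_linear_ode hx
  have hslope : ∀ x, 0 < R x → -(β * qe ^ 2) / p x - γ * p x < 0 := fun x hx =>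
    neg_div_sub_mul_neg (by positivity) hγ (hp x ▸ sqrt_pos.mpr hx)
  refine ⟨?_, fun x hx => ⟨hp x ▸ sqrt_pos.mpr hx, hderiv x hx, hslope x hx,
    hasDerivAt_const x qe, ?_⟩, fun x y hxy hRpos => ?_⟩
  · simp [hp, hR, sqrt_sq hpin.le]
  · rw [abs_of_pos hqe]
    ring
  · exact strictAntiOn_Icc_of_hasDerivAt_neg (fun z hz => hderiv z (hRpos z hz))
      (fun z hz => hslope z (hRpos z hz)) (left_mem_Icc.mpr hxy.le) (right_mem_Icc.mpr hxy.le) hxy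
end

section
/- Let H be a real Hilbert space, D a subspace of H, A : D → H a linear map with ⟨A w, w⟩ ≤ 0 for all w ∈ D, P : H → H a bounded linear operator with ‖P‖ ≤ γ, and M₁, M₂ : H → H bounded linear operators with ‖M₁‖ ≤ μ and ‖M₂‖ ≤ μ. Let T > 0, let b : [0, T] → H be continuous, and let w₁, w₂ : [0, T] → H be differentiable with w_i(t) ∈ D for all t, satisfying w_i'(t) = A(w_i(t)) + P(w_i(t)) + M_i(w_i(t)) + b(t) for i = 1, 2 and all t ∈ [0, T], with w₁(0) = w₂(0) = 0. Then for every t ∈ [0, T]: ‖w₁(t) − w₂(t)‖ ≤ e^{(γ + μ) t} · ∫_0^t ‖(M₁ − M₂)(w₂(s))‖ ds; in particular ‖w₁(t) − w₂(t)‖ ≤ t · e^{(γ + μ) t} · ‖M₁ − M₂‖ · sup_{s ∈ [0, t]} ‖w₂(s)‖. -/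
set_option maxHeartbeats 1000000


open scoped RealInnerProductSpace

/-- abstract core of Proposition 5.11. For two linearized systems
`wᵢ' = A wᵢ + P wᵢ + Mᵢ wᵢ + b` with `A` dissipative, `‖P‖ ≤ γ`, `‖Mᵢ‖ ≤ μ` and
`w₁(0) = w₂(0) = 0`, one has
`‖w₁(t) − w₂(t)‖ ≤ e^{(γ+μ)t} ∫₀ᵗ ‖(M₁ − M₂)(w₂(s))‖ ds`, and in particular
`‖w₁(t) − w₂(t)‖ ≤ t e^{(γ+μ)t} ‖M₁ − M₂‖ sup_{s∈[0,t]} ‖w₂(s)‖`. -/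
theorem linearized_solution_operator_lipschitz
    {H : Type*} [NormedAddCommGroup H] [InnerProductSpace ℝ H]
    (D : Submodule ℝ H) (A : D →ₗ[ℝ] H)
    (hA : ∀ w : D, ⟪A w, (w : H)⟫ ≤ 0)
    (γ μ : ℝ) (P : H →L[ℝ] H) (hP : ‖P‖ ≤ γ)
    (M₁ M₂ : H →L[ℝ] H) (hM₁ : ‖M₁‖ ≤ μ) (hM₂ : ‖M₂‖ ≤ μ)
    (T : ℝ) (hT : 0 < T)
    (b : ℝ → H) (hb : ContinuousOn b (Set.Icc (0 : ℝ) T))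
    (w₁ w₂ w₁' w₂' : ℝ → H)
    (hmem₁ : ∀ t ∈ Set.Icc (0 : ℝ) T, w₁ t ∈ D)
    (hmem₂ : ∀ t ∈ Set.Icc (0 : ℝ) T, w₂ t ∈ D)
    (hd₁ : ∀ t ∈ Set.Icc (0 : ℝ) T, HasDerivAt w₁ (w₁' t) t)
    (hd₂ : ∀ t ∈ Set.Icc (0 : ℝ) T, HasDerivAt w₂ (w₂' t) t)
    (heq₁ : ∀ t, ∀ ht : t ∈ Set.Icc (0 : ℝ) T,
      w₁' t = A ⟨w₁ t, hmem₁ t ht⟩ + P (w₁ t) + M₁ (w₁ t) + b t)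
    (heq₂ : ∀ t, ∀ ht : t ∈ Set.Icc (0 : ℝ) T,
      w₂' t = A ⟨w₂ t, hmem₂ t ht⟩ + P (w₂ t) + M₂ (w₂ t) + b t)
    (h₁0 : w₁ 0 = 0) (h₂0 : w₂ 0 = 0) :
    ∀ t ∈ Set.Icc (0 : ℝ) T,
      (‖w₁ t - w₂ t‖ ≤
        Real.exp ((γ + μ) * t) * ∫ s in (0 : ℝ)..t, ‖(M₁ - M₂) (w₂ s)‖) ∧
      (‖w₁ t - w₂ t‖ ≤
        t * Real.exp ((γ + μ) * t) * ‖M₁ - M₂‖ * ⨆ s : Set.Icc (0 : ℝ) t, ‖w₂ s‖) := by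
  intro t ht
  obtain ⟨ht0, htT⟩ := ht
  have hγ : (0:ℝ) ≤ γ := le_trans (norm_nonneg P) hP
  have hμ : (0:ℝ) ≤ μ := le_trans (norm_nonneg M₁) hM₁
  set K : ℝ := γ + μ with hKdef
  have hK : 0 ≤ K := add_nonneg hγ hμ
  set g : ℝ → ℝ := fun s => ‖(M₁ - M₂) (w₂ s)‖ with hgdef
  set v : ℝ → H := fun s => w₁ s - w₂ s with hvdef
  set v' : ℝ → H := fun s => w₁' s - w₂' s with hvdef'
  have hdv : ∀ s ∈ Set.Icc (0:ℝ) T, HasDerivAt v (v' s) s :=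
    fun s hs => (hd₁ s hs).sub (hd₂ s hs)
  have hg0 : ∀ s, 0 ≤ g s := fun s => norm_nonneg _
  have hgct : ∀ s ∈ Set.Icc (0:ℝ) T, ContinuousAt g s := fun s hs =>
    (((M₁ - M₂).continuous.continuousAt).comp (hd₂ s hs).continuousAt).norm
  -- key differential inequality for the inner product
  have hinner : ∀ s, ∀ hs : s ∈ Set.Icc (0:ℝ) T,
      ⟪v' s, v s⟫ ≤ K * ‖v s‖ ^ 2 + g s * ‖v s‖ := by
    intro s hs
    have hv' : v' s = (A (⟨w₁ s, hmem₁ s hs⟩ - ⟨w₂ s, hmem₂ s hs⟩) : H)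
        + P (v s) + M₁ (v s) + (M₁ - M₂) (w₂ s) := by
      simp only [hvdef', hvdef, heq₁ s hs, heq₂ s hs, map_sub,
        ContinuousLinearMap.sub_apply]
      abel
    have h0 : ⟪(A (⟨w₁ s, hmem₁ s hs⟩ - ⟨w₂ s, hmem₂ s hs⟩) : H), v s⟫ ≤ 0 := by
      have := hA (⟨w₁ s, hmem₁ s hs⟩ - ⟨w₂ s, hmem₂ s hs⟩)
      simpa [hvdef] using this
    have hPb : ⟪P (v s), v s⟫ ≤ γ * ‖v s‖ ^ 2 := by
      calc ⟪P (v s), v s⟫ ≤ ‖P (v s)‖ * ‖v s‖ := real_inner_le_norm _ _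
        _ ≤ (‖P‖ * ‖v s‖) * ‖v s‖ :=
            mul_le_mul_of_nonneg_right (P.le_opNorm _) (norm_nonneg _)
        _ ≤ (γ * ‖v s‖) * ‖v s‖ :=
            mul_le_mul_of_nonneg_right
              (mul_le_mul_of_nonneg_right hP (norm_nonneg _)) (norm_nonneg _)
        _ = γ * ‖v s‖ ^ 2 := by ring
    have hMb : ⟪M₁ (v s), v s⟫ ≤ μ * ‖v s‖ ^ 2 := by
      calc ⟪M₁ (v s), v s⟫ ≤ ‖M₁ (v s)‖ * ‖v s‖ := real_inner_le_norm _ _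
        _ ≤ (‖M₁‖ * ‖v s‖) * ‖v s‖ :=
            mul_le_mul_of_nonneg_right (M₁.le_opNorm _) (norm_nonneg _)
        _ ≤ (μ * ‖v s‖) * ‖v s‖ :=
            mul_le_mul_of_nonneg_right
              (mul_le_mul_of_nonneg_right hM₁ (norm_nonneg _)) (norm_nonneg _)
        _ = μ * ‖v s‖ ^ 2 := by ring
    have hGb : ⟪(M₁ - M₂) (w₂ s), v s⟫ ≤ g s * ‖v s‖ := real_inner_le_norm _ _
    calc ⟪v' s, v s⟫
        = ⟪(A (⟨w₁ s, hmem₁ s hs⟩ - ⟨w₂ s, hmem₂ s hs⟩) : H), v s⟫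
          + ⟪P (v s), v s⟫ + ⟪M₁ (v s), v s⟫ + ⟪(M₁ - M₂) (w₂ s), v s⟫ := by
          rw [hv']; simp [inner_add_left]
      _ ≤ 0 + γ * ‖v s‖ ^ 2 + μ * ‖v s‖ ^ 2 + g s * ‖v s‖ :=
          add_le_add (add_le_add (add_le_add h0 hPb) hMb) hGb
      _ = K * ‖v s‖ ^ 2 + g s * ‖v s‖ := by rw [hKdef]; ring
  have hIccsub : Set.Icc (0:ℝ) t ⊆ Set.Icc (0:ℝ) T := Set.Icc_subset_Icc le_rfl htT
  have hgcont_on : ContinuousOn g (Set.Icc (0:ℝ) t) :=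
    fun s hs => (hgct s (hIccsub hs)).continuousWithinAt
  have hgInt : IntervalIntegrable g MeasureTheory.volume 0 t := by
    apply ContinuousOn.intervalIntegrable
    rwa [Set.uIcc_of_le ht0]
  -- the ε-regularized Grönwall estimate
  have key : ∀ ε : ℝ, 0 < ε →
      ‖v t‖ ≤ Real.exp (K * t) * ((∫ s in (0:ℝ)..t, g s) + ε) := by
    intro ε hε
    set φ : ℝ → ℝ := fun s => Real.sqrt (‖v s‖ ^ 2 + ε ^ 2) with hφdef
    have hφpos : ∀ s, 0 < φ s := fun s => Real.sqrt_pos.2 (by positivity)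
    have hφle : ∀ s, ‖v s‖ ≤ φ s := by
      intro s
      have h1 : ‖v s‖ ^ 2 ≤ ‖v s‖ ^ 2 + ε ^ 2 := by nlinarith
      calc ‖v s‖ = Real.sqrt (‖v s‖ ^ 2) := (Real.sqrt_sq (norm_nonneg _)).symm
        _ ≤ φ s := Real.sqrt_le_sqrt h1
    have hφsq : ∀ s, φ s ^ 2 = ‖v s‖ ^ 2 + ε ^ 2 :=
      fun s => Real.sq_sqrt (by positivity)
    have hφderiv : ∀ s ∈ Set.Icc (0:ℝ) T,
        HasDerivAt φ (⟪v' s, v s⟫ / φ s) s := by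
      intro s hs
      have h1 : HasDerivAt (fun u => ⟪v u, v u⟫) (⟪v s, v' s⟫ + ⟪v' s, v s⟫) s :=
        (hdv s hs).inner ℝ (hdv s hs)
      have h2 : (fun u => ⟪v u, v u⟫ : ℝ → ℝ) = fun u => ‖v u‖ ^ 2 := by
        funext u; rw [real_inner_self_eq_norm_sq]
      have h3 : ⟪v s, v' s⟫ + ⟪v' s, v s⟫ = 2 * ⟪v' s, v s⟫ := by
        rw [real_inner_comm]; ring
      rw [h2, h3] at h1
      have hn : HasDerivAt (fun u => ‖v u‖ ^ 2 + ε ^ 2) (2 * ⟪v' s, v s⟫) s :=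
        h1.add_const _
      have hne : ‖v s‖ ^ 2 + ε ^ 2 ≠ 0 := by positivity
      have := hn.sqrt hne
      convert this using 1
      rw [hφdef]
      rw [mul_div_mul_left _ _ (two_ne_zero)]
    set I : ℝ → ℝ := fun s => ∫ u in (0:ℝ)..s, g u with hIdef
    set F : ℝ → ℝ := fun s => Real.exp (-K * s) * φ s - I s with hFdef
    have hFderiv : ∀ s ∈ Set.Ioo (0:ℝ) t,
        HasDerivAt F ((Real.exp (-K * s) * (-K)) * φ s
          + Real.exp (-K * s) * (⟪v' s, v s⟫ / φ s) - g s) s := by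
      intro s hs
      have hsIcc : s ∈ Set.Icc (0:ℝ) T := hIccsub (Set.Ioo_subset_Icc_self hs)
      have he : HasDerivAt (fun u => Real.exp (-K * u)) (Real.exp (-K * s) * (-K)) s := by
        simpa using ((hasDerivAt_id s).const_mul (-K)).exp
      have hgIntS : IntervalIntegrable g MeasureTheory.volume 0 s :=
        hgInt.mono_set (by
          rw [Set.uIcc_of_le ht0, Set.uIcc_of_le hs.1.le]
          exact Set.Icc_subset_Icc le_rfl hs.2.le)
      have hmeas : StronglyMeasurableAtFilter g (nhds s) MeasureTheory.volume := by
        refine ContinuousOn.stronglyMeasurableAtFilter (isOpen_Ioo (a := (0:ℝ)) (b := T)) ?_ s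
          ⟨hs.1, lt_of_lt_of_le hs.2 htT⟩
        exact fun u hu => (hgct u (Set.Ioo_subset_Icc_self hu)).continuousWithinAt
      have hI : HasDerivAt I (g s) s :=
        intervalIntegral.integral_hasDerivAt_right hgIntS hmeas (hgct s hsIcc)
      exact (he.mul (hφderiv s hsIcc)).sub hI
    have hderiv_nonpos : ∀ s ∈ Set.Ioo (0:ℝ) t, deriv F s ≤ 0 := by
      intro s hs
      have hsIcc : s ∈ Set.Icc (0:ℝ) T := hIccsub (Set.Ioo_subset_Icc_self hs)
      rw [(hFderiv s hs).deriv]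
      have hb : ⟪v' s, v s⟫ ≤ K * ‖v s‖ ^ 2 + g s * ‖v s‖ := hinner s hsIcc
      have h1 : ⟪v' s, v s⟫ / φ s ≤ K * φ s + g s := by
        rw [div_le_iff₀ (hφpos s)]
        have h2 : ‖v s‖ ^ 2 ≤ φ s ^ 2 := by rw [hφsq]; nlinarith
        have h3 : ‖v s‖ ≤ φ s := hφle s
        nlinarith [hg0 s, (hφpos s).le, norm_nonneg (v s)]
      have hexp1 : Real.exp (-K * s) ≤ 1 :=
        Real.exp_le_one_iff.2 (by nlinarith [hs.1.le])
      have hexp_pos : (0:ℝ) < Real.exp (-K * s) := Real.exp_pos _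
      nlinarith [mul_le_mul_of_nonneg_left h1 hexp_pos.le,
        mul_le_mul_of_nonneg_right hexp1 (hg0 s), hφpos s]
    have hFcont : ContinuousOn F (Set.Icc (0:ℝ) t) := by
      apply ContinuousOn.sub
      · apply ContinuousOn.mul
        · exact (Real.continuous_exp.comp (continuous_const.mul continuous_id)).continuousOn
        · exact fun s hs => ((hφderiv s (hIccsub hs)).continuousAt).continuousWithinAt
      · have h_int : MeasureTheory.IntegrableOn g (Set.uIcc (0:ℝ) t) MeasureTheory.volume := by
          rw [Set.uIcc_of_le ht0]
          exact hgcont_on.integrableOn_Icc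
        have := intervalIntegral.continuousOn_primitive_interval (f := g)
          (a := (0:ℝ)) (b := t) h_int
        rwa [Set.uIcc_of_le ht0] at this
    have hanti : AntitoneOn F (Set.Icc (0:ℝ) t) := by
      apply antitoneOn_of_deriv_nonpos (convex_Icc 0 t) hFcont
      · intro s hs
        rw [interior_Icc] at hs
        exact (hFderiv s hs).differentiableAt.differentiableWithinAt
      · intro s hs
        rw [interior_Icc] at hs
        exact hderiv_nonpos s hs
    have hFt : F t ≤ F 0 :=
      hanti (Set.left_mem_Icc.2 ht0) (Set.right_mem_Icc.2 ht0) ht0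
    have hv0 : v 0 = 0 := by simp [hvdef, h₁0, h₂0]
    have hF0 : F 0 = ε := by
      simp [hFdef, hIdef, hφdef, hv0, Real.sqrt_sq hε.le]
    have hmain : Real.exp (-K * t) * φ t ≤ I t + ε := by
      rw [hF0] at hFt
      simp only [hFdef] at hFt
      linarith
    have hexp : φ t = Real.exp (K * t) * (Real.exp (-K * t) * φ t) := by
      have h : K * t + -K * t = 0 := by ring
      rw [← mul_assoc, ← Real.exp_add, h, Real.exp_zero, one_mul]
    calc ‖v t‖ ≤ φ t := hφle t
      _ = Real.exp (K * t) * (Real.exp (-K * t) * φ t) := hexp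
      _ ≤ Real.exp (K * t) * (I t + ε) :=
          mul_le_mul_of_nonneg_left hmain (Real.exp_pos _).le
  -- first bound, by letting ε → 0
  have hbound1 : ‖v t‖ ≤ Real.exp (K * t) * ∫ s in (0:ℝ)..t, g s := by
    refine le_of_forall_pos_le_add ?_
    intro ε hε
    have hε' : 0 < ε / Real.exp (K * t) := by positivity
    calc ‖v t‖ ≤ Real.exp (K * t) * ((∫ s in (0:ℝ)..t, g s) + ε / Real.exp (K * t)) :=
          key _ hε'
      _ = Real.exp (K * t) * (∫ s in (0:ℝ)..t, g s) + ε := by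
          rw [mul_add]
          congr 1
          field_simp
  -- second bound via sup
  have hw₂c : ContinuousOn w₂ (Set.Icc (0:ℝ) t) :=
    fun s hs => ((hd₂ s (hIccsub hs)).continuousAt).continuousWithinAt
  obtain ⟨C, hC⟩ := (isCompact_Icc (a := (0:ℝ)) (b := t)).exists_bound_of_continuousOn hw₂c
  have hbdd : BddAbove (Set.range fun s : Set.Icc (0:ℝ) t => ‖w₂ ↑s‖) := by
    refine ⟨C, ?_⟩
    rintro x ⟨s, rfl⟩
    exact hC s s.2
  have hSle : ∀ s : Set.Icc (0:ℝ) t, ‖w₂ ↑s‖ ≤ ⨆ u : Set.Icc (0:ℝ) t, ‖w₂ ↑u‖ :=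
    fun s => le_ciSup hbdd s
  have hgleS : ∀ s ∈ Set.Icc (0:ℝ) t, g s ≤ ‖M₁ - M₂‖ * ⨆ u : Set.Icc (0:ℝ) t, ‖w₂ ↑u‖ := by
    intro s hs
    calc g s ≤ ‖M₁ - M₂‖ * ‖w₂ s‖ := (M₁ - M₂).le_opNorm _
      _ ≤ _ := mul_le_mul_of_nonneg_left (hSle ⟨s, hs⟩) (norm_nonneg _)
  have hIle : (∫ s in (0:ℝ)..t, g s)
      ≤ t * (‖M₁ - M₂‖ * ⨆ u : Set.Icc (0:ℝ) t, ‖w₂ ↑u‖) := by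
    have h := intervalIntegral.integral_mono_on ht0 hgInt
      (intervalIntegrable_const (c := ‖M₁ - M₂‖ * ⨆ u : Set.Icc (0:ℝ) t, ‖w₂ ↑u‖)) hgleS
    simpa [mul_comm, mul_left_comm] using h
  refine ⟨hbound1, ?_⟩
  calc ‖w₁ t - w₂ t‖ ≤ Real.exp (K * t) * ∫ s in (0:ℝ)..t, g s := hbound1
    _ ≤ Real.exp (K * t) * (t * (‖M₁ - M₂‖ * ⨆ u : Set.Icc (0:ℝ) t, ‖w₂ ↑u‖)) :=
        mul_le_mul_of_nonneg_left hIle (Real.exp_pos _).le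
    _ = t * Real.exp ((γ + μ) * t) * ‖M₁ - M₂‖ * ⨆ u : Set.Icc (0:ℝ) t, ‖w₂ ↑u‖ := by
        rw [hKdef]; ring
end
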